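/- Let G be a connected graph with n ≥ 2 vertices and m edges. For any two original vertices i, j ∈ V, the resistance distance in the triangulation and that in the subdivision are related by Ω^T_{ij} = (1/3)·Ω^S_{ij}. -/

import Mathlib

/-!
Let `x` be the potential on `S(G)` of a unit current from `i` to `j`, i.e. `L_S x = e_i - e_j`.
At an inserted vertex `x` is harmonic, so it is the mean of the values at the two endpoints and the
path `u – e – v` carries the current `(x u - x v) / 2`. In `T(G)` the direct edge `uv` carries
`x u - x v` on top of that, hence `L_T x = 3 (e_i - e_j)` and `x / 3` is the unit-current potential
of `T(G)`. Since `Ω_ij = (e_i - e_j) ⬝ y` for every `y` with `L y = e_i - e_j`, the claim follows.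
-/

open BigOperators Matrix

namespace KirchhoffPaper

/-- `B` is a Moore–Penrose (pseudo)inverse of `A`. -/
def IsMoorePenrose {n : Type*} [Fintype n] [DecidableEq n] (A B : Matrix n n ℝ) : Prop :=
  A * B * A = A ∧ B * A * B = B ∧ (A * B)ᵀ = A * B ∧ (B * A)ᵀ = B * A

variable {V : Type*}

/-- The resistance distance between `i` and `j` in `G`:
`Ω_{ij} = L⁺_{ii} + L⁺_{jj} - 2 L⁺_{ij}` with `L⁺` the Moore–Penrose inverse of the Laplacian. -/
noncomputable def resistanceDistance [Fintype V] [DecidableEq V]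
    (G : SimpleGraph V) [DecidableRel G.Adj] (i j : V) : ℝ :=
  letI := Classical.propDecidable
  if h : ∃ B, IsMoorePenrose (G.lapMatrix ℝ) B then
    h.choose i i + h.choose j j - 2 * h.choose i j
  else 0

/-- Kirchhoff index `R(G) = Σ_{{i,j}⊆V} Ω_{ij}` (as half the sum over ordered pairs;
note `Ω_{ii} = 0`). -/
noncomputable def kirchhoffIndex [Fintype V] [DecidableEq V]
    (G : SimpleGraph V) [DecidableRel G.Adj] : ℝ :=
  (1 / 2) * ∑ i, ∑ j, resistanceDistance G i j

/-- Additive degree-Kirchhoff index `R⁺(G) = Σ_{{i,j}⊆V} (d_i + d_j) Ω_{ij}`. -/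
noncomputable def addDegKirchhoffIndex [Fintype V] [DecidableEq V]
    (G : SimpleGraph V) [DecidableRel G.Adj] : ℝ :=
  (1 / 2) * ∑ i, ∑ j, ((G.degree i : ℝ) + (G.degree j : ℝ)) * resistanceDistance G i j

/-- Multiplicative degree-Kirchhoff index `R*(G) = Σ_{{i,j}⊆V} d_i d_j Ω_{ij}`. -/
noncomputable def mulDegKirchhoffIndex [Fintype V] [DecidableEq V]
    (G : SimpleGraph V) [DecidableRel G.Adj] : ℝ :=
  (1 / 2) * ∑ i, ∑ j, ((G.degree i : ℝ) * (G.degree j : ℝ)) * resistanceDistance G i j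

/-- The subdivision `S(G)`: each edge of `G` is replaced by a path of length two through a
new vertex (one new vertex per edge of `G`). -/
def subdivision [DecidableEq V] (G : SimpleGraph V) : SimpleGraph (V ⊕ G.edgeSet) where
  Adj x y :=
    match x, y with
    | Sum.inl u, Sum.inr e => u ∈ (e : Sym2 V)
    | Sum.inr e, Sum.inl u => u ∈ (e : Sym2 V)
    | _, _ => False
  symm := by constructor; rintro (u | e) (v | f) h <;> exact h
  loopless := by constructor; rintro (u | e) h <;> exact h

/-- The triangulation `T(G)`: each edge `uv` of `G` is turned into a triangle `uwv`
with `w` a new vertex associated with `uv`. -/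
def triangulation [DecidableEq V] (G : SimpleGraph V) : SimpleGraph (V ⊕ G.edgeSet) where
  Adj x y :=
    match x, y with
    | Sum.inl u, Sum.inl v => G.Adj u v
    | Sum.inl u, Sum.inr e => u ∈ (e : Sym2 V)
    | Sum.inr e, Sum.inl u => u ∈ (e : Sym2 V)
    | _, _ => False
  symm := by
    constructor
    rintro (u | e) (v | f) h
    · exact G.adj_symm h
    · exact h
    · exact h
    · exact h
  loopless := by
    constructor
    rintro (u | e) h
    · exact G.loopless.irrefl u h
    · exact h

instance [Fintype V] [DecidableEq V] (G : SimpleGraph V) [DecidableRel G.Adj] :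
    DecidableRel (subdivision G).Adj := fun x y =>
  match x, y with
  | Sum.inl _, Sum.inl _ => inferInstanceAs (Decidable False)
  | Sum.inl u, Sum.inr e => inferInstanceAs (Decidable (u ∈ (e : Sym2 V)))
  | Sum.inr e, Sum.inl u => inferInstanceAs (Decidable (u ∈ (e : Sym2 V)))
  | Sum.inr _, Sum.inr _ => inferInstanceAs (Decidable False)

instance [Fintype V] [DecidableEq V] (G : SimpleGraph V) [DecidableRel G.Adj] :
    DecidableRel (triangulation G).Adj := fun x y =>
  match x, y with
  | Sum.inl u, Sum.inl v => inferInstanceAs (Decidable (G.Adj u v))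
  | Sum.inl u, Sum.inr e => inferInstanceAs (Decidable (u ∈ (e : Sym2 V)))
  | Sum.inr e, Sum.inl u => inferInstanceAs (Decidable (u ∈ (e : Sym2 V)))
  | Sum.inr _, Sum.inr _ => inferInstanceAs (Decidable False)

/-- A bundled finite simple graph (with decidable adjacency), used for iterating
the subdivision and triangulation constructions. -/
structure FGraph where
  V : Type*
  [fV : Fintype V]
  [dV : DecidableEq V]
  G : SimpleGraph V
  [dG : DecidableRel G.Adj]

attribute [instance] FGraph.fV FGraph.dV FGraph.dG

/-- Subdivision, as an operation on bundled graphs. -/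
def FGraph.subdiv (H : FGraph) : FGraph := { V := H.V ⊕ H.G.edgeSet, G := subdivision H.G }

/-- Triangulation, as an operation on bundled graphs. -/
def FGraph.triang (H : FGraph) : FGraph := { V := H.V ⊕ H.G.edgeSet, G := triangulation H.G }

/-- Kirchhoff index of a bundled graph. -/
noncomputable def FGraph.R (H : FGraph) : ℝ := kirchhoffIndex H.G

/-- Additive degree-Kirchhoff index of a bundled graph. -/
noncomputable def FGraph.Rplus (H : FGraph) : ℝ := addDegKirchhoffIndex H.G

/-- Multiplicative degree-Kirchhoff index of a bundled graph. -/
noncomputable def FGraph.Rstar (H : FGraph) : ℝ := mulDegKirchhoffIndex H.G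

section MoorePenrose

variable {W : Type*} [Fintype W] [DecidableEq W]

omit [Fintype W] [DecidableEq W] in
lemma isSymm_iff_isSelfAdjoint {A : Matrix W W ℝ} : A.IsSymm ↔ IsSelfAdjoint A := by
  rw [IsSelfAdjoint, star_eq_conjTranspose, conjTranspose_eq_transpose_of_trivial]
  rfl

/-- The inverse is `cfc (·⁻¹) A`: since `0⁻¹ = 0`, it inverts the nonzero eigenvalues and kills the
kernel. -/
lemma exists_isMoorePenrose_of_isSymm {A : Matrix W W ℝ} (hA : A.IsSymm) :
    ∃ B, IsMoorePenrose A B ∧ B.IsSymm := by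
  have hmul : ∀ f g : ℝ → ℝ, cfc (fun x => f x * g x) A = cfc f A * cfc g A := fun f g =>
    cfc_mul f g A (A.finite_spectrum.continuousOn f) (A.finite_spectrum.continuousOn g)
  have hsymm : ∀ f : ℝ → ℝ, (cfc f A).IsSymm := fun f =>
    isSymm_iff_isSelfAdjoint.mpr (cfc_predicate f A)
  have hid : cfc (fun x : ℝ => x) A = A := cfc_id' ℝ A (isSymm_iff_isSelfAdjoint.mp hA)
  refine ⟨cfc (·⁻¹) A, ⟨?_, ?_, ?_, ?_⟩, hsymm _⟩
  · calc A * cfc (·⁻¹) A * A = cfc (fun x => x * x⁻¹ * x) A := by rw [hmul, hmul, hid]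
      _ = A := by simp only [mul_inv_mul_cancel, hid]
  · calc cfc (·⁻¹) A * A * cfc (·⁻¹) A = cfc (fun x => x⁻¹ * x * x⁻¹) A := by
          rw [hmul, hmul, hid]
      _ = cfc (·⁻¹) A := by
          congr 1 with x
          simpa only [inv_inv] using mul_inv_mul_cancel x⁻¹
  · have h := hmul (fun x => x) (·⁻¹)
    rw [hid] at h
    rw [← h]
    exact hsymm _
  · have h := hmul (·⁻¹) (fun x => x)
    rw [hid] at h
    rw [← h]
    exact hsymm _

lemma IsMoorePenrose.unique {A B C : Matrix W W ℝ}
    (hB : IsMoorePenrose A B) (hC : IsMoorePenrose A C) : B = C := by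
  obtain ⟨hB1, hB2, hB3, hB4⟩ := hB
  obtain ⟨hC1, hC2, hC3, hC4⟩ := hC
  have hAB : A * B = A * C := by
    calc A * B = (A * B)ᵀ := hB3.symm
    _ = ((A * C * A) * B)ᵀ := by rw [hC1]
    _ = ((A * C) * (A * B))ᵀ := by noncomm_ring
    _ = (A * B)ᵀ * (A * C)ᵀ := by rw [transpose_mul]
    _ = (A * B) * (A * C) := by rw [hB3, hC3]
    _ = (A * B * A) * C := by noncomm_ring
    _ = A * C := by rw [hB1]
  have hBA : B * A = C * A := by
    calc B * A = (B * A)ᵀ := hB4.symm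
    _ = (B * (A * C * A))ᵀ := by rw [hC1]
    _ = ((B * A) * (C * A))ᵀ := by noncomm_ring
    _ = (C * A)ᵀ * (B * A)ᵀ := by rw [transpose_mul]
    _ = (C * A) * (B * A) := by rw [hB4, hC4]
    _ = C * (A * B * A) := by noncomm_ring
    _ = C * A := by rw [hB1]
  calc B = B * A * B := hB2.symm
  _ = B * (A * C) := by rw [mul_assoc, hAB]
  _ = (C * A) * C := by rw [← mul_assoc, hBA]
  _ = C := hC2

lemma IsMoorePenrose.mul_self_mul_eq {A B : Matrix W W ℝ} (hA : A.IsSymm) (hBs : B.IsSymm)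
    (hB : IsMoorePenrose A B) : A * A * B = A := by
  calc A * A * B = A * (A * B)ᵀ := by rw [mul_assoc, hB.2.2.1]
    _ = A := by rw [transpose_mul, hA.eq, hBs.eq, ← mul_assoc, hB.1]

lemma IsMoorePenrose.dotProduct_mulVec_mulVec {A B : Matrix W W ℝ} (hA : A.IsSymm)
    (hB : IsMoorePenrose A B) (y : W → ℝ) :
    (A *ᵥ y) ⬝ᵥ (B *ᵥ (A *ᵥ y)) = (A *ᵥ y) ⬝ᵥ y := by
  rw [mulVec_mulVec, dotProduct_mulVec, ← vecMul_transpose, hA.eq, vecMul_vecMul, ← mul_assoc,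
    hB.1]

lemma single_sub_single_dotProduct_mulVec {B : Matrix W W ℝ} (hB : B.IsSymm) (i j : W) :
    (Pi.single i 1 - Pi.single j 1) ⬝ᵥ (B *ᵥ (Pi.single i 1 - Pi.single j 1)) =
      B i i + B j j - 2 * B i j := by
  simp only [mulVec_sub, mulVec_single_one, sub_dotProduct, dotProduct_sub, single_dotProduct,
    col_apply, one_mul, hB.apply j i]
  ring

end MoorePenrose

section Resistance

variable {W : Type*} [Fintype W] [DecidableEq W] (H : SimpleGraph W) [DecidableRel H.Adj]

lemma resistanceDistance_eq_of_isMoorePenrose {B : Matrix W W ℝ}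
    (hB : IsMoorePenrose (H.lapMatrix ℝ) B) (i j : W) :
    resistanceDistance H i j = B i i + B j j - 2 * B i j := by
  have hex : ∃ B, IsMoorePenrose (H.lapMatrix ℝ) B := ⟨B, hB⟩
  -- `resistanceDistance` builds the Laplacian from classical decidability instances.
  rw [resistanceDistance, Subsingleton.elim (fun a b => Classical.propDecidable (H.Adj a b)) ‹_›,
    Subsingleton.elim (fun a b : W => Classical.propDecidable (a = b)) ‹_›, dif_pos hex,
    hex.choose_spec.unique hB]

theorem resistanceDistance_eq_dotProduct {i j : W} {y : W → ℝ}
    (hy : H.lapMatrix ℝ *ᵥ y = Pi.single i 1 - Pi.single j 1) :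
    resistanceDistance H i j = (Pi.single i 1 - Pi.single j 1) ⬝ᵥ y := by
  obtain ⟨B, hB, hBsymm⟩ := exists_isMoorePenrose_of_isSymm (H.isSymm_lapMatrix ℝ)
  rw [resistanceDistance_eq_of_isMoorePenrose H hB, ← single_sub_single_dotProduct_mulVec hBsymm,
    ← hy, hB.dotProduct_mulVec_mulVec (H.isSymm_lapMatrix ℝ)]

lemma lapMatrix_mulVec_apply_eq_sum (x : W → ℝ) (a : W) :
    (H.lapMatrix ℝ *ᵥ x) a = ∑ b, if H.Adj a b then x a - x b else 0 := by
  rw [H.lapMatrix_mulVec_apply, ← Finset.sum_filter, ← SimpleGraph.neighborFinset_eq_filter,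
    Finset.sum_sub_distrib, Finset.sum_const, SimpleGraph.card_neighborFinset_eq_degree,
    nsmul_eq_mul]

lemma sum_lapMatrix_mulVec (y : W → ℝ) : ∑ a, (H.lapMatrix ℝ *ᵥ y) a = 0 := by
  rw [← one_dotProduct, dotProduct_mulVec, ← mulVec_transpose, (H.isSymm_lapMatrix ℝ).eq]
  exact congrArg (· ⬝ᵥ y) H.lapMatrix_mulVec_const_eq_zero |>.trans (zero_dotProduct y)

theorem exists_lapMatrix_mulVec_eq (hH : H.Connected) {v : W → ℝ} (hv : ∑ a, v a = 0) :
    ∃ y, H.lapMatrix ℝ *ᵥ y = v := by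
  obtain ⟨B, hB, hBsymm⟩ := exists_isMoorePenrose_of_isSymm (H.isSymm_lapMatrix ℝ)
  refine ⟨B *ᵥ v, ?_⟩
  set w := v - H.lapMatrix ℝ *ᵥ (B *ᵥ v)
  have hker : H.lapMatrix ℝ *ᵥ w = 0 := by
    rw [mulVec_sub, mulVec_mulVec, mulVec_mulVec, hB.mul_self_mul_eq (H.isSymm_lapMatrix ℝ) hBsymm,
      sub_self]
  have hconst : ∀ a b, w a = w b := fun a b =>
    (H.lapMatrix_mulVec_eq_zero_iff_forall_reachable.mp hker) a b (hH.preconnected a b)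
  have hsum : ∑ a, w a = 0 := by
    simp only [w, Pi.sub_apply, Finset.sum_sub_distrib, hv, sum_lapMatrix_mulVec, sub_zero]
  have hw : w = 0 := by
    ext a
    have hcard : (Fintype.card W : ℝ) * w a = 0 := by
      rw [← hsum, Finset.sum_congr rfl fun b _ => hconst b a, Finset.sum_const, Finset.card_univ,
        nsmul_eq_mul]
    have : Nonempty W := ⟨a⟩
    exact (mul_eq_zero.mp hcard).resolve_left (Nat.cast_ne_zero.mpr Fintype.card_ne_zero)
  exact (sub_eq_zero.mp hw).symm

end Resistance

section SubdivisionTriangulation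

variable {V : Type*} [DecidableEq V] (G : SimpleGraph V)

@[simp] lemma subdivision_adj_inl_inl (u v : V) : ¬(subdivision G).Adj (.inl u) (.inl v) := id

@[simp] lemma subdivision_adj_inl_inr (u : V) (e : G.edgeSet) :
    (subdivision G).Adj (.inl u) (.inr e) ↔ u ∈ (e : Sym2 V) := .rfl

@[simp] lemma subdivision_adj_inr_inl (e : G.edgeSet) (u : V) :
    (subdivision G).Adj (.inr e) (.inl u) ↔ u ∈ (e : Sym2 V) := .rfl

@[simp] lemma subdivision_adj_inr_inr (e f : G.edgeSet) :
    ¬(subdivision G).Adj (.inr e) (.inr f) := id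

@[simp] lemma triangulation_adj_inl_inl (u v : V) :
    (triangulation G).Adj (.inl u) (.inl v) ↔ G.Adj u v := .rfl

@[simp] lemma triangulation_adj_inl_inr (u : V) (e : G.edgeSet) :
    (triangulation G).Adj (.inl u) (.inr e) ↔ u ∈ (e : Sym2 V) := .rfl

@[simp] lemma triangulation_adj_inr_inl (e : G.edgeSet) (u : V) :
    (triangulation G).Adj (.inr e) (.inl u) ↔ u ∈ (e : Sym2 V) := .rfl

@[simp] lemma triangulation_adj_inr_inr (e f : G.edgeSet) :
    ¬(triangulation G).Adj (.inr e) (.inr f) := id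

theorem subdivision_connected (hG : G.Connected) : (subdivision G).Connected := by
  have hV : ∀ u v : V, (subdivision G).Reachable (.inl u) (.inl v) := by
    intro u v
    induction (hG.preconnected u v).some with
    | nil => rfl
    | @cons a b _ hab _ ih =>
      have ha : (subdivision G).Adj (.inl a) (.inr ⟨s(a, b), hab⟩) := Sym2.mem_mk_left a b
      have hb : (subdivision G).Adj (.inr ⟨s(a, b), hab⟩) (.inl b) := Sym2.mem_mk_right a b
      exact ha.reachable.trans (hb.reachable.trans ih)
  have hbase : ∀ x, ∃ u : V, (subdivision G).Reachable (.inl u) x := by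
    rintro (u | ⟨e, he⟩)
    · exact ⟨u, .rfl⟩
    · induction e using Sym2.ind with
      | _ a b =>
        exact ⟨a, (show (subdivision G).Adj (.inl a) (.inr ⟨s(a, b), he⟩) from
          Sym2.mem_mk_left a b).reachable⟩
  refine (SimpleGraph.connected_iff_exists_forall_reachable _).mpr
    ⟨.inl hG.nonempty.some, fun x => ?_⟩
  obtain ⟨u, hu⟩ := hbase x
  exact (hV _ u).trans hu

variable [Fintype V] [DecidableRel G.Adj]

lemma sum_edgeSet_ite_mem {M : Type*} [AddCommMonoid M] (u : V) (f : G.edgeSet → M) :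
    ∑ e : G.edgeSet, (if u ∈ (e : Sym2 V) then f e else 0) =
      ∑ v, if h : G.Adj u v then f ⟨s(u, v), h⟩ else 0 := by
  have hmem : ∀ e : G.edgeSet, (if u ∈ (e : Sym2 V) then f e else 0) ≠ 0 → u ∈ (e : Sym2 V) :=
    fun e he => by_contra fun hu => he (if_neg hu)
  refine Finset.sum_bij_ne_zero (fun e _ he => Sym2.Mem.other' (hmem e he))
    (fun _ _ _ => Finset.mem_univ _)
    (fun e _ he e' _ he' heq => ?_) (fun v _ hv => ?_) (fun e _ he => ?_)
  · rw [← Subtype.coe_inj, ← Sym2.other_spec' (hmem e he), ← Sym2.other_spec' (hmem e' he'), heq]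
  · have huv : G.Adj u v := by_contra fun huv => hv (dif_neg huv)
    refine ⟨⟨s(u, v), huv⟩, Finset.mem_univ _, ?_, ?_⟩
    · simpa [huv] using hv
    · exact Sym2.congr_right.mp (Sym2.other_spec' (Sym2.mem_mk_left u v))
  · have hue := Sym2.other_spec' (hmem e he)
    have hadj : G.Adj u (Sym2.Mem.other' (hmem e he)) := by
      rw [← SimpleGraph.mem_edgeSet, hue]; exact e.2
    rw [if_pos (hmem e he), dif_pos hadj]
    exact congrArg f (Subtype.ext hue.symm)

lemma subdivision_lapMatrix_mulVec_inl (x : V ⊕ G.edgeSet → ℝ) (u : V) :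
    ((subdivision G).lapMatrix ℝ *ᵥ x) (.inl u) =
      ∑ v, if h : G.Adj u v then x (.inl u) - x (.inr ⟨s(u, v), h⟩) else 0 := by
  rw [lapMatrix_mulVec_apply_eq_sum, Fintype.sum_sum_type]
  simp only [subdivision_adj_inl_inl, subdivision_adj_inl_inr, if_false, Finset.sum_const_zero,
    zero_add]
  exact sum_edgeSet_ite_mem G u _

lemma subdivision_lapMatrix_mulVec_inr (x : V ⊕ G.edgeSet → ℝ) {a b : V} (h : G.Adj a b) :
    ((subdivision G).lapMatrix ℝ *ᵥ x) (.inr ⟨s(a, b), h⟩) =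
      2 * x (.inr ⟨s(a, b), h⟩) - x (.inl a) - x (.inl b) := by
  have hnbr : (subdivision G).neighborFinset (.inr ⟨s(a, b), h⟩) = {.inl a, .inl b} := by
    ext (v | e) <;> simp
  rw [SimpleGraph.lapMatrix_mulVec_apply, ← SimpleGraph.card_neighborFinset_eq_degree, hnbr,
    Finset.card_pair (by simpa using h.ne), Finset.sum_pair (by simpa using h.ne)]
  push_cast
  ring

lemma triangulation_lapMatrix_mulVec_inl (x : V ⊕ G.edgeSet → ℝ) (u : V) :
    ((triangulation G).lapMatrix ℝ *ᵥ x) (.inl u) =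
      (G.lapMatrix ℝ *ᵥ (x ∘ .inl)) u + ((subdivision G).lapMatrix ℝ *ᵥ x) (.inl u) := by
  simp only [lapMatrix_mulVec_apply_eq_sum, Fintype.sum_sum_type]
  simp

lemma triangulation_lapMatrix_mulVec_inr (x : V ⊕ G.edgeSet → ℝ) (e : G.edgeSet) :
    ((triangulation G).lapMatrix ℝ *ᵥ x) (.inr e) =
      ((subdivision G).lapMatrix ℝ *ᵥ x) (.inr e) := by
  simp only [lapMatrix_mulVec_apply_eq_sum, Fintype.sum_sum_type]
  simp

lemma two_mul_subdivision_lapMatrix_mulVec_inl {x : V ⊕ G.edgeSet → ℝ}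
    (hx : ∀ e, ((subdivision G).lapMatrix ℝ *ᵥ x) (.inr e) = 0) (u : V) :
    2 * ((subdivision G).lapMatrix ℝ *ᵥ x) (.inl u) = (G.lapMatrix ℝ *ᵥ (x ∘ .inl)) u := by
  rw [subdivision_lapMatrix_mulVec_inl, lapMatrix_mulVec_apply_eq_sum, Finset.mul_sum]
  refine Finset.sum_congr rfl fun v _ => ?_
  by_cases h : G.Adj u v
  · have hmid := hx ⟨s(u, v), h⟩
    rw [subdivision_lapMatrix_mulVec_inr] at hmid
    simp only [h, dif_pos, if_pos, Function.comp_apply]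
    linarith
  · simp [h]

theorem triangulation_lapMatrix_mulVec_eq_three_smul {x : V ⊕ G.edgeSet → ℝ}
    (hx : ∀ e, ((subdivision G).lapMatrix ℝ *ᵥ x) (.inr e) = 0) :
    (triangulation G).lapMatrix ℝ *ᵥ x = (3 : ℝ) • (subdivision G).lapMatrix ℝ *ᵥ x := by
  ext (u | e)
  · rw [triangulation_lapMatrix_mulVec_inl, ← two_mul_subdivision_lapMatrix_mulVec_inl G hx,
      Pi.smul_apply, smul_eq_mul]
    ring
  · rw [triangulation_lapMatrix_mulVec_inr, Pi.smul_apply, hx, smul_zero]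

end SubdivisionTriangulation

theorem statement_12_general {V : Type*} [Fintype V] [DecidableEq V]
    (G : SimpleGraph V) [DecidableRel G.Adj]
    (hconn : G.Connected) :
    ∀ i j : V,
      resistanceDistance (triangulation G) (Sum.inl i) (Sum.inl j) =
        (1 / 3) * resistanceDistance (subdivision G) (Sum.inl i) (Sum.inl j) := by
  intro i j
  set δ : V ⊕ G.edgeSet → ℝ := Pi.single (.inl i) 1 - Pi.single (.inl j) 1
  obtain ⟨x, hx⟩ := exists_lapMatrix_mulVec_eq _ (subdivision_connected G hconn)
    (v := δ) (by simp [δ, Finset.sum_sub_distrib])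
  have hT : (triangulation G).lapMatrix ℝ *ᵥ ((1 / 3 : ℝ) • x) = δ := by
    rw [mulVec_smul, triangulation_lapMatrix_mulVec_eq_three_smul G (by simp [hx, δ]), hx,
      smul_smul]
    norm_num
  rw [resistanceDistance_eq_dotProduct _ hT, resistanceDistance_eq_dotProduct _ hx,
    dotProduct_smul, smul_eq_mul]

theorem statement_12 {V : Type*} [Fintype V] [DecidableEq V]
    (G : SimpleGraph V) [DecidableRel G.Adj] (n m : ℕ)
    (hn : Fintype.card V = n) (hm : G.edgeFinset.card = m)
    (hconn : G.Connected) (hn2 : 2 ≤ n) :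
    ∀ i j : V,
      resistanceDistance (triangulation G) (Sum.inl i) (Sum.inl j) =
        (1 / 3) * resistanceDistance (subdivision G) (Sum.inl i) (Sum.inl j) :=
  statement_12_general G hconn

end KirchhoffPaper
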